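/- arXiv:1410.2675 — 5 statements merged into one kernel-verified Lean document; each statement's English description precedes it below -/
import Mathlib

section
/- The action of A × N on SL(2,ℝ) given by (a,n)·x = a x n⁻¹, where A = {Aₜ = diag(eᵗ,e⁻ᵗ)} and N = {N_s = I + sE₁₂}, is not proper: with gₙ = (Aₙ, N_{eⁿ}) and pₙ = e⁻ⁿE₁₁ + E₁₂ − E₂₁, one has pₙ → E₁₂ − E₂₁, gₙ·pₙ → I, but (gₙ) has no convergent subsequence. -/
open Matrix Filter Topology

noncomputable section

local notation "M2" => Matrix (Fin 2) (Fin 2) ℝ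
local notation "SL2" => Matrix.SpecialLinearGroup (Fin 2) ℝ

instance : TopologicalSpace SL2 :=
  inferInstanceAs (TopologicalSpace {A : M2 // A.det = 1})

/-- Aₜ = diag(eᵗ, e⁻ᵗ) -/
def Am (t : ℝ) : M2 := !![Real.exp t, 0; 0, Real.exp (-t)]
/-- N_s = I + sE₁₂ -/
def Nm (s : ℝ) : M2 := !![1, s; 0, 1]

/-- The action of `A × N` on SL(2,ℝ) by `(a,n)·x = a x n⁻¹` is not proper: with
`gₙ = (Aₙ, N_{eⁿ})` and `pₙ = e⁻ⁿE₁₁ + E₁₂ − E₂₁` one has `pₙ → E₁₂ − E₂₁`,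
`gₙ·pₙ → I`, but `(gₙ)` has no convergent subsequence. -/
theorem AN_action_not_proper :
    Tendsto (fun n : ℕ => (!![Real.exp (-(n : ℝ)), 1; -1, 0] : M2)) atTop
      (nhds (!![0, 1; -1, 0] : M2)) ∧
    Tendsto (fun n : ℕ =>
        Am (n : ℝ) * (!![Real.exp (-(n : ℝ)), 1; -1, 0] : M2) * (Nm (Real.exp (n : ℝ)))⁻¹)
      atTop (nhds (1 : M2)) ∧
    (¬ ∃ φ : ℕ → ℕ, StrictMono φ ∧ ∃ l : M2 × M2,
        Tendsto (fun n : ℕ => ((Am ((φ n : ℕ) : ℝ), Nm (Real.exp ((φ n : ℕ) : ℝ))) : M2 × M2))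
          atTop (nhds l)) ∧
    ¬ IsProperMap (fun z : (ℝ × ℝ) × SL2 =>
        ((Am z.1.1 * (z.2 : M2) * (Nm z.1.2)⁻¹, (z.2 : M2)) : M2 × M2)) := by
  have hNinv : ∀ s : ℝ, (Nm s)⁻¹ = Nm (-s) := fun s =>
    Matrix.inv_eq_right_inv (by
      simp [Nm, Matrix.mul_fin_two, Matrix.one_fin_two])
  have hexp0 : Tendsto (fun n : ℕ => Real.exp (-(n : ℝ))) atTop (nhds 0) :=
    Real.tendsto_exp_atBot.comp (tendsto_neg_atTop_atBot.comp tendsto_natCast_atTop_atTop)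
  have hcont1 : Continuous fun x : ℝ => (!![x, 1; -1, 0] : M2) := by
    apply continuous_matrix
    intro i j
    fin_cases i <;> fin_cases j <;> simp <;> fun_prop
  have h1 : Tendsto (fun n : ℕ => (!![Real.exp (-(n : ℝ)), 1; -1, 0] : M2)) atTop
      (nhds (!![0, 1; -1, 0] : M2)) :=
    (hcont1.tendsto 0).comp hexp0
  have hprod : ∀ t : ℝ,
      Am t * (!![Real.exp (-t), 1; -1, 0] : M2) * (Nm (Real.exp t))⁻¹
        = !![1, 0; -Real.exp (-t), 1] := by
    intro t
    rw [hNinv]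
    have h : Real.exp t * Real.exp (-t) = 1 := by
      rw [← Real.exp_add]; simp
    have h' : Real.exp (-t) * Real.exp t = 1 := by
      rw [← Real.exp_add]; simp
    simp [Am, Nm, Matrix.mul_fin_two, h, h', mul_comm]
  have hcont2 : Continuous fun x : ℝ => (!![1, 0; -x, 1] : M2) := by
    apply continuous_matrix
    intro i j
    fin_cases i <;> fin_cases j <;> simp <;> fun_prop
  have h2 : Tendsto (fun n : ℕ =>
      Am (n : ℝ) * (!![Real.exp (-(n : ℝ)), 1; -1, 0] : M2) * (Nm (Real.exp (n : ℝ)))⁻¹)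
      atTop (nhds (1 : M2)) := by
    have : Tendsto (fun n : ℕ => (!![1, 0; -Real.exp (-(n : ℝ)), 1] : M2)) atTop
        (nhds (!![1, 0; -0, 1] : M2)) := (hcont2.tendsto 0).comp hexp0
    simp only [hprod]
    convert this using 2
    rw [Matrix.one_fin_two]
    norm_num
  refine ⟨h1, h2, ?_, ?_⟩
  · rintro ⟨φ, hφ, l, hl⟩
    have hev : Continuous fun m : M2 × M2 => m.1 0 0 :=
      (continuous_apply (0 : Fin 2)).comp ((continuous_apply (0 : Fin 2)).comp continuous_fst)
    have h3 : Tendsto (fun n : ℕ => Real.exp ((φ n : ℕ) : ℝ)) atTop (nhds (l.1 0 0)) := by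
      have := (hev.tendsto l).comp hl
      simpa [Function.comp_def, Am] using this
    exact not_tendsto_atTop_of_tendsto_nhds h3
      (Real.tendsto_exp_atTop.comp (tendsto_natCast_atTop_atTop.comp hφ.tendsto_atTop))
  · intro hp
    set p : ℕ → SL2 := fun n =>
      ⟨!![Real.exp (-(n : ℝ)), 1; -1, 0], by simp [Matrix.det_fin_two_of]⟩ with hp_def
    set z : ℕ → (ℝ × ℝ) × SL2 := fun n => (((n : ℝ), Real.exp (n : ℝ)), p n) with hz_def
    set f : (ℝ × ℝ) × SL2 → M2 × M2 := fun z =>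
      (Am z.1.1 * (z.2 : M2) * (Nm z.1.2)⁻¹, (z.2 : M2)) with hf_def
    have hfz : Tendsto (f ∘ z) atTop (nhds ((1 : M2), (!![0, 1; -1, 0] : M2))) := by
      exact h2.prodMk_nhds h1
    have hmc : MapClusterPt ((1 : M2), (!![0, 1; -1, 0] : M2)) (Filter.map z atTop) f :=
      mapClusterPt_comp.mp hfz.mapClusterPt
    obtain ⟨x, -, hx⟩ := hp.clusterPt_of_mapClusterPt hmc
    have hπ : ContinuousAt (fun w : (ℝ × ℝ) × SL2 => w.1.1) x :=
      (continuous_fst.comp continuous_fst).continuousAt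
    have hc : ClusterPt x.1.1 (Filter.map (fun n : ℕ => (n : ℝ)) atTop) := by
      have := hx.map hπ (Filter.tendsto_map (f := fun w : (ℝ × ℝ) × SL2 => w.1.1))
      rw [Filter.map_map] at this
      exact this
    have hdisj : Disjoint (nhds x.1.1) (Filter.map (fun n : ℕ => (n : ℝ)) atTop) :=
      (disjoint_nhds_atTop x.1.1).mono_right tendsto_natCast_atTop_atTop
    exact hc.ne (by rwa [disjoint_iff] at hdisj)
end
end

section
/- Consider the action of the group G_FK = {(F_{t,s}, K_t) : s,t ∈ ℝ} on SL(2,ℝ) by (g,k)·x = g x k⁻¹, where F_{t,s} = diag(eᵗ,e⁻ᵗ) + sE₁₂ and K_t is rotation by angle t. This action is proper: if F_{xₙ,yₙ} pₙ K_{xₙ}⁻¹ → q and pₙ → p in SL(2,ℝ), then the sequences (xₙ) and (yₙ) in ℝ both have convergent subsequences. -/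
open Matrix Filter Topology

noncomputable section

local notation "M2" => Matrix (Fin 2) (Fin 2) ℝ
local notation "SL2" => Matrix.SpecialLinearGroup (Fin 2) ℝ

/-- F_{t,s} = diag(eᵗ, e⁻ᵗ) + sE₁₂ -/
def Fm (t s : ℝ) : M2 := !![Real.exp t, s; 0, Real.exp (-t)]
/-- K_t = cos(t)I + sin(t)(E₂₁ − E₁₂) -/
def Km (t : ℝ) : M2 := !![Real.cos t, -Real.sin t; Real.sin t, Real.cos t]

lemma Km_mul_Km_neg (t : ℝ) : Km t * Km (-t) = 1 := by
  have h := Real.sin_sq_add_cos_sq t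
  ext i j
  fin_cases i <;> fin_cases j <;>
    simp [Km, Matrix.mul_apply, Fin.sum_univ_two, Real.cos_neg, Real.sin_neg] <;> nlinarith [h]

lemma Km_inv (t : ℝ) : (Km t)⁻¹ = Km (-t) :=
  Matrix.inv_eq_right_inv (Km_mul_Km_neg t)

lemma Km_neg_mul_Km (t : ℝ) : Km (-t) * Km t = 1 := by
  have := Km_mul_Km_neg (-t)
  rwa [neg_neg] at this

lemma continuous_Km : Continuous Km := by
  apply continuous_matrix
  intro i j
  fin_cases i <;> fin_cases j <;> simp [Km] <;> fun_prop

lemma row_ne_zero (m : SL2) : (m : M2) 1 0 ≠ 0 ∨ (m : M2) 1 1 ≠ 0 := by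
  by_contra h
  push_neg at h
  have hd := m.2
  rw [Matrix.det_fin_two] at hd
  rw [h.1, h.2] at hd
  simp at hd

lemma row_sq_pos (m : SL2) : 0 < ((m : M2) 1 0) ^ 2 + ((m : M2) 1 1) ^ 2 := by
  rcases row_ne_zero m with h | h
  · have := pow_pos (abs_pos.mpr h) 2
    rw [← sq_abs ((m : M2) 1 0)]
    nlinarith [sq_nonneg ((m : M2) 1 1)]
  · have := pow_pos (abs_pos.mpr h) 2
    rw [← sq_abs ((m : M2) 1 1)]
    nlinarith [sq_nonneg ((m : M2) 1 0)]

/-- The action of `G_FK = {(F_{t,s}, K_t)}` on SL(2,ℝ) by `(g,k)·x = g x k⁻¹` is proper: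
if `F_{xₙ,yₙ} pₙ K_{xₙ}⁻¹ → q` and `pₙ → p` then `(xₙ)` and `(yₙ)` both have convergent
subsequences. -/
theorem GFK_action_proper (x y : ℕ → ℝ) (pseq : ℕ → SL2) (p q : SL2)
    (h1 : Tendsto (fun n => Fm (x n) (y n) * ((pseq n : M2)) * (Km (x n))⁻¹) atTop
      (nhds (q : M2)))
    (h2 : Tendsto (fun n => ((pseq n : M2))) atTop (nhds (p : M2))) :
    (∃ φ : ℕ → ℕ, StrictMono φ ∧ ∃ l : ℝ, Tendsto (x ∘ φ) atTop (nhds l)) ∧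
    (∃ φ : ℕ → ℕ, StrictMono φ ∧ ∃ l : ℝ, Tendsto (y ∘ φ) atTop (nhds l)) := by
  -- entrywise limits
  have entry : ∀ (i j : Fin 2), Continuous (fun M : M2 => M i j) :=
    fun i j => (continuous_apply j).comp (continuous_apply i)
  have hA : ∀ i j, Tendsto (fun n => (Fm (x n) (y n) * ((pseq n : M2)) * (Km (x n))⁻¹) i j)
      atTop (nhds ((q : M2) i j)) := fun i j => ((entry i j).tendsto _).comp h1
  have hP : ∀ i j, Tendsto (fun n => ((pseq n : M2)) i j) atTop (nhds ((p : M2) i j)) :=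
    fun i j => ((entry i j).tendsto _).comp h2
  -- bottom-row entries of A
  have hA10 : ∀ n, (Fm (x n) (y n) * ((pseq n : M2)) * (Km (x n))⁻¹) 1 0 =
      Real.exp (-(x n)) * ((pseq n : M2) 1 0 * Real.cos (x n)
        - (pseq n : M2) 1 1 * Real.sin (x n)) := by
    intro n
    rw [Km_inv]
    simp [Fm, Km, Matrix.mul_apply, Matrix.vecMul, dotProduct, Fin.sum_univ_two,
      Real.cos_neg, Real.sin_neg]
    ring
  have hA11 : ∀ n, (Fm (x n) (y n) * ((pseq n : M2)) * (Km (x n))⁻¹) 1 1 =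
      Real.exp (-(x n)) * ((pseq n : M2) 1 0 * Real.sin (x n)
        + (pseq n : M2) 1 1 * Real.cos (x n)) := by
    intro n
    rw [Km_inv]
    simp [Fm, Km, Matrix.mul_apply, Matrix.vecMul, dotProduct, Fin.sum_univ_two,
      Real.cos_neg, Real.sin_neg]
    ring
  -- squared norm of bottom row
  set Q : ℝ := ((q : M2) 1 0) ^ 2 + ((q : M2) 1 1) ^ 2 with hQdef
  set S : ℝ := ((p : M2) 1 0) ^ 2 + ((p : M2) 1 1) ^ 2 with hSdef
  have hQpos : 0 < Q := row_sq_pos q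
  have hSpos : 0 < S := row_sq_pos p
  have hr : Tendsto (fun n => (Fm (x n) (y n) * ((pseq n : M2)) * (Km (x n))⁻¹) 1 0 ^ 2
      + (Fm (x n) (y n) * ((pseq n : M2)) * (Km (x n))⁻¹) 1 1 ^ 2) atTop (nhds Q) :=
    ((hA 1 0).pow 2).add ((hA 1 1).pow 2)
  have hs : Tendsto (fun n => ((pseq n : M2) 1 0) ^ 2 + ((pseq n : M2) 1 1) ^ 2)
      atTop (nhds S) := ((hP 1 0).pow 2).add ((hP 1 1).pow 2)
  have hspos : ∀ n, 0 < ((pseq n : M2) 1 0) ^ 2 + ((pseq n : M2) 1 1) ^ 2 :=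
    fun n => row_sq_pos (pseq n)
  have hexpe : ∀ n, Real.exp (-(2 * x n)) =
      ((Fm (x n) (y n) * ((pseq n : M2)) * (Km (x n))⁻¹) 1 0 ^ 2
      + (Fm (x n) (y n) * ((pseq n : M2)) * (Km (x n))⁻¹) 1 1 ^ 2)
      / (((pseq n : M2) 1 0) ^ 2 + ((pseq n : M2) 1 1) ^ 2) := by
    intro n
    rw [hA10, hA11]
    have h1 := Real.sin_sq_add_cos_sq (x n)
    have h2 : Real.exp (-(x n)) * Real.exp (-(x n)) = Real.exp (-(2 * x n)) := by
      rw [← Real.exp_add]; ring_nf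
    rw [eq_div_iff (ne_of_gt (hspos n))]
    linear_combination (-(((pseq n : M2) 1 0) ^ 2 + ((pseq n : M2) 1 1) ^ 2)) * h2
      - Real.exp (-(x n)) * Real.exp (-(x n))
        * (((pseq n : M2) 1 0) ^ 2 + ((pseq n : M2) 1 1) ^ 2) * h1
  have hexp : Tendsto (fun n => Real.exp (-(2 * x n))) atTop (nhds (Q / S)) := by
    rw [funext hexpe]
    exact hr.div hs (ne_of_gt hSpos)
  have hQS : (0:ℝ) < Q / S := div_pos hQpos hSpos
  have hlog : Tendsto (fun n => Real.log (Real.exp (-(2 * x n)))) atTop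
      (nhds (Real.log (Q / S))) := ((Real.continuousAt_log (ne_of_gt hQS)).tendsto).comp hexp
  have hx : Tendsto x atTop (nhds (-(Real.log (Q / S)) / 2)) := by
    have := (hlog.neg).div_const 2
    refine this.congr (fun n => ?_)
    rw [Real.log_exp]; ring
  set l : ℝ := -(Real.log (Q / S)) / 2 with hl
  refine ⟨⟨id, strictMono_id, l, by simpa using hx⟩, ?_⟩
  -- now the y part
  have hKm : Tendsto (fun n => Km (x n)) atTop (nhds (Km l)) :=
    (continuous_Km.tendsto l).comp hx
  have hB : Tendsto (fun n => Fm (x n) (y n) * ((pseq n : M2)) * (Km (x n))⁻¹ * Km (x n))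
      atTop (nhds ((q : M2) * Km l)) := h1.mul hKm
  have hBeq : ∀ n, Fm (x n) (y n) * ((pseq n : M2)) * (Km (x n))⁻¹ * Km (x n)
      = Fm (x n) (y n) * ((pseq n : M2)) := by
    intro n
    rw [Km_inv, mul_assoc, Km_neg_mul_Km, mul_one]
  rw [funext hBeq] at hB
  have hB0 : ∀ j, Tendsto (fun n => (Fm (x n) (y n) * ((pseq n : M2))) 0 j)
      atTop (nhds (((q : M2) * Km l) 0 j)) := fun j => ((entry 0 j).tendsto _).comp hB
  have hFP : ∀ n (j : Fin 2), (Fm (x n) (y n) * ((pseq n : M2))) 0 j =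
      Real.exp (x n) * (pseq n : M2) 0 j + y n * (pseq n : M2) 1 j := by
    intro n j
    simp [Fm, Matrix.mul_apply, Fin.sum_univ_two]
  have hexpx : Tendsto (fun n => Real.exp (x n)) atTop (nhds (Real.exp l)) :=
    (Real.continuous_exp.tendsto l).comp hx
  have hyP : ∀ j : Fin 2, Tendsto (fun n => y n * (pseq n : M2) 1 j) atTop
      (nhds (((q : M2) * Km l) 0 j - Real.exp l * (p : M2) 0 j)) := by
    intro j
    have := (hB0 j).sub (hexpx.mul (hP 0 j))
    refine this.congr (fun n => ?_)
    rw [hFP n j]; ring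
  rcases row_ne_zero p with h | h
  · refine ⟨id, strictMono_id, (((q : M2) * Km l) 0 0 - Real.exp l * (p : M2) 0 0) / (p : M2) 1 0, ?_⟩
    have hd := (hyP 0).div (hP 1 0) h
    have hev : ∀ᶠ n in atTop, (y n * (pseq n : M2) 1 0) / (pseq n : M2) 1 0 = y n := by
      have : ∀ᶠ n in atTop, (pseq n : M2) 1 0 ≠ 0 :=
        (hP 1 0).eventually_ne h
      filter_upwards [this] with n hn
      field_simp
    simpa using hd.congr' hev
  · refine ⟨id, strictMono_id, (((q : M2) * Km l) 0 1 - Real.exp l * (p : M2) 0 1) / (p : M2) 1 1, ?_⟩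
    have hd := (hyP 1).div (hP 1 1) h
    have hev : ∀ᶠ n in atTop, (y n * (pseq n : M2) 1 1) / (pseq n : M2) 1 1 = y n := by
      have : ∀ᶠ n in atTop, (pseq n : M2) 1 1 ≠ 0 :=
        (hP 1 1).eventually_ne h
      filter_upwards [this] with n hn
      field_simp
    simpa using hd.congr' hev
end
end

section
/- The action of G_FK on SL(2,ℝ) is free: if F_{t,s} x K_t⁻¹ = x for some x ∈ SL(2,ℝ), then t = 0 and s = 0. -/
open Matrix

noncomputable section

local notation "M2" => Matrix (Fin 2) (Fin 2) ℝ
local notation "SL2" => Matrix.SpecialLinearGroup (Fin 2) ℝ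

/-- The action of `G_FK` on SL(2,ℝ), `(F_{t,s}, K_t)·x = F_{t,s} x K_t⁻¹`, is free. -/
theorem GFK_action_free (t s : ℝ) (x : SL2)
    (h : Fm t s * (x : M2) * (Km t)⁻¹ = (x : M2)) : t = 0 ∧ s = 0 := by
  have hdetK : (Km t).det = 1 := by
    simp [Km, Matrix.det_fin_two_of]
    nlinarith [Real.sin_sq_add_cos_sq t]
  have hKinv : (Km t)⁻¹ * Km t = 1 := Matrix.nonsing_inv_mul _ (by simp [hdetK])
  have heq : Fm t s * (x : M2) = (x : M2) * Km t := by
    have h2 := congrArg (fun m => m * Km t) h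
    simp only [mul_assoc] at h2
    rw [hKinv, mul_one] at h2
    exact h2
  set a := (x : M2) 0 0 with ha
  set b := (x : M2) 0 1 with hb
  set c := (x : M2) 1 0 with hc
  set d := (x : M2) 1 1 with hd
  have hdet : a * d - b * c = 1 := by
    have := x.property
    rw [Matrix.det_fin_two] at this
    linarith [this]
  have e1 := congrFun (congrFun heq 0) 0
  have e2 := congrFun (congrFun heq 0) 1
  have e3 := congrFun (congrFun heq 1) 0
  have e4 := congrFun (congrFun heq 1) 1
  simp [Fm, Km, Matrix.mul_apply, Fin.sum_univ_two, ← ha, ← hb, ← hc, ← hd] at e1 e2 e3 e4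
  have htr : Real.exp t + Real.exp (-t) = 2 * Real.cos t := by
    linear_combination d * e1 - c * e2 - b * e3 + a * e4 -
      (Real.exp t + Real.exp (-t) - 2 * Real.cos t) * hdet
  have hprod : Real.exp t * Real.exp (-t) = 1 := by
    rw [← Real.exp_add]; simp
  have hexp1 : Real.exp t = 1 := by
    nlinarith [Real.exp_pos t, Real.cos_le_one t, sq_nonneg (Real.exp t - 1)]
  have hexp2 : Real.exp (-t) = 1 := by rw [hexp1] at hprod; linarith
  have ht : t = 0 := by
    nlinarith [Real.add_one_le_exp t, Real.add_one_le_exp (-t)]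
  subst ht
  simp at e1 e2
  refine ⟨rfl, ?_⟩
  rcases e1 with h1 | hc0
  · exact h1
  rcases e2 with h2 | hd0
  · exact h2
  exfalso
  simp [hc0, hd0] at hdet
end
end

section
/- For the action of A × A on SL(2,ℝ) by (Aₜ, A_s)·x = Aₜ x A_s⁻¹: the stabilizer of p ∈ SL(2,ℝ) is nontrivial if and only if p ∈ ±(A ∪ JA), where J = E₁₂ − E₂₁; in that case the stabilizer is {(Aₜ, Aₜ) : t ∈ ℝ} when p ∈ ±A and {(Aₜ, A₋ₜ) : t ∈ ℝ} when p ∈ ±JA, while for all other p the stabilizer is trivial. -/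
open Matrix

noncomputable section

local notation "M2" => Matrix (Fin 2) (Fin 2) ℝ
local notation "SL2" => Matrix.SpecialLinearGroup (Fin 2) ℝ

/-- J = E₁₂ − E₂₁ -/
def Jm : M2 := !![0, 1; -1, 0]

/-- The stabilizer of `p` for the action of `A × A` on SL(2,ℝ), `(Aₜ,A_s)·x = Aₜ x A_s⁻¹`,
as a set of parameters `(t,s)`. -/
def stabAA (p : SL2) : Set (ℝ × ℝ) := {q | Am q.1 * (p : M2) * (Am q.2)⁻¹ = (p : M2)}

/-- `p` lies in `±A`. -/
def inPMA (p : SL2) : Prop := ∃ t : ℝ, (p : M2) = Am t ∨ (p : M2) = -Am t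

/-- `p` lies in `±JA`. -/
def inPMJA (p : SL2) : Prop := ∃ t : ℝ, (p : M2) = Jm * Am t ∨ (p : M2) = -(Jm * Am t)

/-!
Since `Aₜ` is diagonal, `Aₜ x A_s⁻¹` multiplies the entries of `x` by `e^{±(t-s)}` on the
diagonal and by `e^{±(t+s)}` off it. Hence `(t, s)` fixes `p` iff `s = t` or both diagonal
entries of `p` vanish, and `s = -t` or both off-diagonal entries vanish. The elements of
`SL(2,ℝ)` with vanishing off-diagonal (resp. diagonal) entries are exactly `±A` (resp. `±JA`),
and `det p = 1` forbids both at once; so the stabilizer is the line `s = t` on `±A`, the line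
`s = -t` on `±JA`, and the intersection `{(0, 0)}` of the two lines elsewhere.
-/

open Real

lemma Am_mul_Am (t u : ℝ) : Am t * Am u = Am (t + u) := by
  simp only [Am, mul_fin_two, ← exp_add]
  norm_num [neg_add, add_comm]

lemma Am_inv (t : ℝ) : (Am t)⁻¹ = Am (-t) :=
  inv_eq_right_inv <| by
    rw [Am_mul_Am, add_neg_cancel, Am, neg_zero, exp_zero, one_fin_two]

lemma Am_mul_mul_Am (t s : ℝ) (M : M2) :
    Am t * M * Am s = !![exp (t + s) * M 0 0, exp (t - s) * M 0 1;
      exp (s - t) * M 1 0, exp (-(t + s)) * M 1 1] := by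
  rw [eta_fin_two M]
  simp only [Am, mul_fin_two]
  ext i j
  fin_cases i <;> fin_cases j <;> simp [exp_add, exp_sub, exp_neg] <;> ring

lemma exp_mul_eq_self_iff {x v : ℝ} : exp x * v = v ↔ v = 0 ∨ x = 0 := by
  rcases eq_or_ne v 0 with hv | hv
  · simp [hv]
  · simp [mul_eq_right₀ hv, hv]

lemma exists_eq_exp_or_eq_neg_exp {a : ℝ} (ha : a ≠ 0) :
    ∃ t, a = exp t ∧ a⁻¹ = exp (-t) ∨ a = -exp t ∧ a⁻¹ = -exp (-t) := by
  refine ⟨log |a|, ?_⟩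
  rw [exp_neg, exp_log (abs_pos.mpr ha)]
  rcases abs_choice a with h | h <;> rw [h]
  · exact Or.inl ⟨rfl, rfl⟩
  · exact Or.inr ⟨(neg_neg a).symm, by rw [inv_neg, neg_neg]⟩

lemma SpecialLinearGroup.det_fin_two_eq_one {R : Type*} [CommRing R]
    (p : SpecialLinearGroup (Fin 2) R) :
    (p : Matrix (Fin 2) (Fin 2) R) 0 0 * (p : Matrix (Fin 2) (Fin 2) R) 1 1 -
      (p : Matrix (Fin 2) (Fin 2) R) 0 1 * (p : Matrix (Fin 2) (Fin 2) R) 1 0 = 1 := by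
  rw [← det_fin_two]
  exact p.2

lemma Jm_mul_Am (t : ℝ) : Jm * Am t = !![0, exp (-t); -exp t, 0] := by
  simp [Jm, Am]

lemma inPMA_iff (p : SL2) : inPMA p ↔ (p : M2) 0 1 = 0 ∧ (p : M2) 1 0 = 0 := by
  refine ⟨by rintro ⟨t, h | h⟩ <;> simp [h, Am], fun ⟨hb, hc⟩ => ?_⟩
  have had : (p : M2) 0 0 * (p : M2) 1 1 = 1 := by
    simpa [hb] using SpecialLinearGroup.det_fin_two_eq_one p
  have hd : (p : M2) 1 1 = ((p : M2) 0 0)⁻¹ := eq_inv_of_mul_eq_one_right had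
  obtain ⟨t, ⟨ha, ha'⟩ | ⟨ha, ha'⟩⟩ :=
    exists_eq_exp_or_eq_neg_exp (left_ne_zero_of_mul_eq_one had)
  all_goals
    refine ⟨t, ?_⟩
    rw [eta_fin_two (p : M2), hb, hc, hd, ha']
  · exact Or.inl (by rw [ha, Am])
  · exact Or.inr (by rw [ha, Am]; ext i j; fin_cases i <;> fin_cases j <;> simp)

lemma inPMJA_iff (p : SL2) : inPMJA p ↔ (p : M2) 0 0 = 0 ∧ (p : M2) 1 1 = 0 := by
  refine ⟨by rintro ⟨t, h | h⟩ <;> simp [h, Jm_mul_Am], fun ⟨ha, hd⟩ => ?_⟩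
  have hbc : (p : M2) 0 1 * -(p : M2) 1 0 = 1 := by
    simpa [ha] using SpecialLinearGroup.det_fin_two_eq_one p
  have hc : (p : M2) 1 0 = -((p : M2) 0 1)⁻¹ := by
    rw [← eq_inv_of_mul_eq_one_right hbc, neg_neg]
  obtain ⟨t, ⟨hb, hb'⟩ | ⟨hb, hb'⟩⟩ :=
    exists_eq_exp_or_eq_neg_exp (inv_ne_zero (left_ne_zero_of_mul_eq_one hbc))
  all_goals
    rw [inv_inv] at hb'
    refine ⟨t, ?_⟩
    rw [eta_fin_two (p : M2), ha, hd, hc, hb, hb', Jm_mul_Am]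
  · exact Or.inl rfl
  · exact Or.inr (by ext i j; fin_cases i <;> fin_cases j <;> simp)

lemma mem_stabAA_iff (p : SL2) (t s : ℝ) :
    (t, s) ∈ stabAA p ↔ (inPMJA p ∨ s = t) ∧ (inPMA p ∨ s = -t) := by
  rw [inPMA_iff, inPMJA_iff, stabAA, Set.mem_ofPred_eq, Am_inv, Am_mul_mul_Am,
    ← Matrix.ext_iff]
  simp only [Fin.forall_fin_two, of_apply, cons_val', cons_val_zero, cons_val_one, empty_val',
    cons_val_fin_one, exp_mul_eq_self_iff]
  have h₀₀ : t + -s = 0 ↔ s = t := ⟨fun h => by linarith, fun h => by linarith⟩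
  have h₀₁ : t - -s = 0 ↔ s = -t := ⟨fun h => by linarith, fun h => by linarith⟩
  have h₁₀ : -s - t = 0 ↔ s = -t := ⟨fun h => by linarith, fun h => by linarith⟩
  have h₁₁ : -(t + -s) = 0 ↔ s = t := ⟨fun h => by linarith, fun h => by linarith⟩
  rw [h₀₀, h₀₁, h₁₀, h₁₁]
  tauto

lemma not_inPMA_and_inPMJA (p : SL2) : ¬(inPMA p ∧ inPMJA p) := by
  rw [inPMA_iff, inPMJA_iff]
  rintro ⟨⟨hb, -⟩, ha, -⟩
  simpa [ha, hb] using SpecialLinearGroup.det_fin_two_eq_one p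

lemma stabAA_of_inPMA {p : SL2} (h : inPMA p) : stabAA p = {q : ℝ × ℝ | q.2 = q.1} := by
  have hJ : ¬inPMJA p := fun hJ => not_inPMA_and_inPMJA p ⟨h, hJ⟩
  ext ⟨t, s⟩
  simp [mem_stabAA_iff, h, hJ]

lemma stabAA_of_inPMJA {p : SL2} (h : inPMJA p) : stabAA p = {q : ℝ × ℝ | q.2 = -q.1} := by
  have hA : ¬inPMA p := fun hA => not_inPMA_and_inPMJA p ⟨hA, h⟩
  ext ⟨t, s⟩
  simp [mem_stabAA_iff, h, hA]

lemma stabAA_of_not_inPMA_or_inPMJA {p : SL2} (h : ¬(inPMA p ∨ inPMJA p)) :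
    stabAA p = {((0 : ℝ), (0 : ℝ))} := by
  rw [not_or] at h
  ext ⟨t, s⟩
  simp only [mem_stabAA_iff, h.1, h.2, false_or, Set.mem_singleton_iff, Prod.mk.injEq]
  constructor <;> rintro ⟨h₁, h₂⟩ <;> constructor <;> linarith

/-- For the action of `A × A` on SL(2,ℝ): the stabilizer of `p` is nontrivial iff
`p ∈ ±(A ∪ JA)`; it is `{(Aₜ,Aₜ)}` for `p ∈ ±A`, `{(Aₜ,A₋ₜ)}` for `p ∈ ±JA`, and
trivial otherwise. -/
theorem AA_stabilizers (p : SL2) :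
    (stabAA p ≠ {((0 : ℝ), (0 : ℝ))} ↔ inPMA p ∨ inPMJA p) ∧
    (inPMA p → stabAA p = {q : ℝ × ℝ | q.2 = q.1}) ∧
    (inPMJA p → stabAA p = {q : ℝ × ℝ | q.2 = -q.1}) ∧
    (¬ (inPMA p ∨ inPMJA p) → stabAA p = {((0 : ℝ), (0 : ℝ))}) := by
  refine ⟨⟨fun hne => ?_, ?_⟩, stabAA_of_inPMA, stabAA_of_inPMJA,
    stabAA_of_not_inPMA_or_inPMJA⟩
  · by_contra h
    exact hne (stabAA_of_not_inPMA_or_inPMJA h)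
  rintro (h | h) htriv
  · have h₁ : ((1 : ℝ), (1 : ℝ)) ∈ stabAA p :=
      (mem_stabAA_iff p 1 1).2 ⟨Or.inr rfl, Or.inl h⟩
    simp [htriv] at h₁
  · have h₁ : ((1 : ℝ), (-1 : ℝ)) ∈ stabAA p :=
      (mem_stabAA_iff p 1 (-1)).2 ⟨Or.inl h, Or.inr rfl⟩
    simp [htriv] at h₁
end
end

section
/- For the action of diag(Aff₀(ℝ) × Aff₀(ℝ)) on SL(2,ℝ) by conjugation g·x = g x g⁻¹ restricted to g ∈ Aff₀(ℝ): two points p, p' with p₂₁ ≠ 0 and p'₂₁ ≠ 0 lie in the same orbit if and only if p₂₁p'₂₁ > 0 and p₁₁ + p₂₂ = p'₁₁ + p'₂₂. -/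
/-!
Conjugation by `F_{t,s}` preserves trace and determinant, multiplies the lower-left entry by
`e^{-2t}` and shifts the upper-left entry by `s e^{-t} p₂₁`. A 2×2 matrix with nonzero lower-left
entry is determined by its first column, trace and determinant, so once the signs of `p₂₁` and
`p'₂₁` agree, `t` can be chosen to match the lower-left entries and then `s` to match the
upper-left ones.
-/

open Matrix

noncomputable section

local notation "M2" => Matrix (Fin 2) (Fin 2) ℝ
local notation "SL2" => Matrix.SpecialLinearGroup (Fin 2) ℝ

lemma Matrix.eq_of_det_eq_of_trace_eq_of_col_zero_eq {R : Type*} [CommRing R] [IsDomain R]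
    {A B : Matrix (Fin 2) (Fin 2) R} (hdet : A.det = B.det) (htr : A.trace = B.trace)
    (h00 : A 0 0 = B 0 0) (h10 : A 1 0 = B 1 0) (hne : B 1 0 ≠ 0) : A = B := by
  rw [trace_fin_two, trace_fin_two, h00, add_right_inj] at htr
  rw [det_fin_two, det_fin_two, h00, htr, h10, sub_right_inj] at hdet
  have h01 : A 0 1 = B 0 1 := mul_right_cancel₀ hne hdet
  ext i j
  fin_cases i <;> fin_cases j <;> assumption

lemma det_Fm (t s : ℝ) : (Fm t s).det = 1 := by
  rw [Fm, det_fin_two_of, ← Real.exp_add]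
  simp

lemma isUnit_Fm (t s : ℝ) : IsUnit (Fm t s) :=
  (isUnit_iff_isUnit_det _).2 (by simp [det_Fm])

lemma Fm_inv (t s : ℝ) : (Fm t s)⁻¹ = !![Real.exp (-t), -s; 0, Real.exp t] := by
  rw [inv_def, det_Fm, Ring.inverse_one, one_smul, Fm, adjugate_fin_two_of, neg_zero]

lemma Fm_conj_apply_one_zero (t s : ℝ) (A : M2) :
    (Fm t s * A * (Fm t s)⁻¹) 1 0 = Real.exp (-t) ^ 2 * A 1 0 := by
  rw [Fm_inv, Fm, eta_fin_two A, mul_fin_two, mul_fin_two]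
  simp only [of_apply, cons_val', cons_val_zero, cons_val_one, cons_val_fin_one]
  ring

lemma Fm_conj_apply_zero_zero (t s : ℝ) (A : M2) :
    (Fm t s * A * (Fm t s)⁻¹) 0 0 = A 0 0 + s * Real.exp (-t) * A 1 0 := by
  have hexp : Real.exp t * Real.exp (-t) = 1 := by rw [← Real.exp_add, add_neg_cancel, Real.exp_zero]
  rw [Fm_inv, Fm, eta_fin_two A, mul_fin_two, mul_fin_two]
  simp only [of_apply, cons_val', cons_val_zero, cons_val_one, cons_val_fin_one]
  linear_combination A 0 0 * hexp

lemma mul_Fm_conj_apply_one_zero_pos (t s : ℝ) {A : M2} (hA : A 1 0 ≠ 0) :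
    0 < A 1 0 * (Fm t s * A * (Fm t s)⁻¹) 1 0 := by
  rw [Fm_conj_apply_one_zero]
  have hsq : A 1 0 * (Real.exp (-t) ^ 2 * A 1 0) = (Real.exp (-t) * A 1 0) ^ 2 := by ring
  rw [hsq]
  positivity

lemma exists_Fm_conj_eq {A B : M2} (hdet : A.det = B.det) (htr : A.trace = B.trace)
    (hpos : 0 < A 1 0 * B 1 0) : ∃ t s : ℝ, Fm t s * A * (Fm t s)⁻¹ = B := by
  have hA : A 1 0 ≠ 0 := left_ne_zero_of_mul hpos.ne'
  have hratio : 0 < B 1 0 / A 1 0 := div_pos_iff.2 (mul_pos_iff.1 (mul_comm (A 1 0) _ ▸ hpos))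
  set w := Real.exp (Real.log (B 1 0 / A 1 0) / 2) with hw
  have hw_sq : w ^ 2 = B 1 0 / A 1 0 := by
    rw [hw, sq, ← Real.exp_add, add_halves, Real.exp_log hratio]
  have hw0 : w ≠ 0 := Real.exp_ne_zero _
  refine ⟨-(Real.log (B 1 0 / A 1 0) / 2), (B 0 0 - A 0 0) / (w * A 1 0), ?_⟩
  apply eq_of_det_eq_of_trace_eq_of_col_zero_eq
  · rw [det_conj (isUnit_Fm _ _), hdet]
  · rw [trace_conj (isUnit_Fm _ _), htr]
  · rw [Fm_conj_apply_zero_zero, neg_neg, ← hw]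
    field_simp
    ring
  · rw [Fm_conj_apply_one_zero, neg_neg, ← hw, hw_sq, div_mul_cancel₀ _ hA]
  · exact right_ne_zero_of_mul hpos.ne'

theorem diagAff_orbit_criterion_general (p p' : SL2)
    (h : (p : M2) 1 0 ≠ 0) :
    (∃ t s : ℝ, Fm t s * (p : M2) * (Fm t s)⁻¹ = (p' : M2)) ↔
      0 < (p : M2) 1 0 * (p' : M2) 1 0 ∧
      (p : M2) 0 0 + (p : M2) 1 1 = (p' : M2) 0 0 + (p' : M2) 1 1 := by
  rw [← trace_fin_two, ← trace_fin_two]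
  constructor
  · rintro ⟨t, s, hconj⟩
    rw [← hconj]
    exact ⟨mul_Fm_conj_apply_one_zero_pos t s h, (trace_conj (isUnit_Fm t s) _).symm⟩
  · rintro ⟨hpos, htr⟩
    exact exists_Fm_conj_eq (by rw [p.2, p'.2]) htr hpos

/-- For the conjugation action of `Aff₀(ℝ)` on SL(2,ℝ): points `p, p'` with
`p₂₁ ≠ 0 ≠ p'₂₁` lie in the same orbit iff `p₂₁p'₂₁ > 0` and `p₁₁ + p₂₂ = p'₁₁ + p'₂₂`. -/
theorem diagAff_orbit_criterion (p p' : SL2)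
    (h : (p : M2) 1 0 ≠ 0) (h' : (p' : M2) 1 0 ≠ 0) :
    (∃ t s : ℝ, Fm t s * (p : M2) * (Fm t s)⁻¹ = (p' : M2)) ↔
      0 < (p : M2) 1 0 * (p' : M2) 1 0 ∧
      (p : M2) 0 0 + (p : M2) 1 1 = (p' : M2) 0 0 + (p' : M2) 1 1 :=
  diagAff_orbit_criterion_general p p' h
end
end
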